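/- Let δ be a p-state and c a conditional plan. If Regress*(c,δ) = δ' and δ' ≠ ⊥, then for every a-state σ ∈ ext(δ'): (i) ⊥ ∉ Φ*(c,σ) and (ii) Φ*(c,σ) ⊆ ext(δ). -/

import Mathlib

open scoped Classical

/-! ## States -/

/-- A state: a pair of finite sets of fluents (true ones and false ones).
Used for both a-states (when the two sets are disjoint, see `St.OK`) and
p-states (partial states). -/
structure St (V : Type*) where
  T : Finset V
  F : Finset V
deriving DecidableEq

variable {V : Type*} [DecidableEq V]

/-- A pair of sets of fluents is a genuine (a- or p-) state when the sets are disjoint. -/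
def St.OK (s : St V) : Prop := Disjoint s.T s.F

/-- The extension set `ext(δ)` of a p-state `δ`: all a-states extending it. -/
def exts (δ : St V) : Set (St V) := {σ | σ.OK ∧ δ.T ⊆ σ.T ∧ δ.F ⊆ σ.F}

/-- `δ'` is a partial extension of `δ`. -/
def pext (δ δ' : St V) : Prop := δ.T ⊆ δ'.T ∧ δ.F ⊆ δ'.F

/-! ## Actions -/

/-- A non-sensing action: precondition literals (positive part `preP`, negative part
`preN`), and disjoint add and delete lists. -/
structure NAct (V : Type*) where
  preP : Finset V
  preN : Finset V
  add : Finset V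
  del : Finset V
  hdisj : Disjoint add del

/-- A sensing action: precondition literals and a set of sensed fluents not occurring
in the precondition. -/
structure SAct (V : Type*) where
  preP : Finset V
  preN : Finset V
  sens : Finset V
  hsens : Disjoint sens (preP ∪ preN)

/-- Executability of a non-sensing action in an a-state. -/
def NAct.execIn (a : NAct V) (σ : St V) : Prop := a.preP ⊆ σ.T ∧ a.preN ⊆ σ.F

/-- Executability of a sensing action in an a-state. -/
def SAct.execIn (a : SAct V) (σ : St V) : Prop := a.preP ⊆ σ.T ∧ a.preN ⊆ σ.F

/-- The result of executing a non-sensing action `a` in an a-state `σ`. -/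
def NAct.res (a : NAct V) (σ : St V) : St V :=
  ⟨σ.T \ a.del ∪ a.add, σ.F \ a.add ∪ a.del⟩

/-- The transition function `Φ` for a non-sensing action (`none` plays the role of `⊥`). -/
def PhiN (a : NAct V) (σ : St V) : Set (Option (St V)) :=
  {x | (a.execIn σ ∧ x = some (a.res σ)) ∨ (¬ a.execIn σ ∧ x = none)}

/-- The possible results of executing a sensing action `a` in an a-state `σ`. -/
def sres (a : SAct V) (σ : St V) : Set (St V) :=
  {σ' | σ'.OK ∧ σ.T ⊆ σ'.T ∧ σ.F ⊆ σ'.F ∧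
    (σ'.T \ σ.T) ∪ (σ'.F \ σ.F) = a.sens \ (σ.T ∪ σ.F)}

/-- The transition function `Φ` for a sensing action (`none` plays the role of `⊥`). -/
def PhiS (a : SAct V) (σ : St V) : Set (Option (St V)) :=
  {x | (a.execIn σ ∧ ∃ σ' ∈ sres a σ, x = some σ') ∨ (¬ a.execIn σ ∧ x = none)}

/-! ## Regression for single actions -/

/-- Applicability of a non-sensing action `a` in a p-state `δ`. -/
def AppN (a : NAct V) (δ : St V) : Prop :=
  ((a.add ∩ δ.T).Nonempty ∨ (a.del ∩ δ.F).Nonempty) ∧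
  Disjoint a.add δ.F ∧ Disjoint a.del δ.T ∧
  a.preP ∩ δ.F ⊆ a.del ∧ a.preN ∩ δ.T ⊆ a.add

/-- Regression of a non-sensing action over a p-state (`none` is `⊥`). -/
noncomputable def RegressN (a : NAct V) (δ : St V) : Option (St V) :=
  if AppN a δ then some ⟨δ.T \ a.add ∪ a.preP, δ.F \ a.del ∪ a.preN⟩ else none

/-- `X` is a sensed set of the set `Δ` of (distinct) p-states with respect to the sensing
action `a`, i.e. `X` is a nonempty subset of `Sens_a` and `Δ` is proper with respect to `X`. -/
def SensedSet (a : SAct V) (Δ : Finset (St V)) (X : Finset V) : Prop :=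
  X.Nonempty ∧ X ⊆ a.sens ∧
  (∀ δ ∈ Δ, a.sens ⊆ δ.T ∪ δ.F) ∧
  Δ.card = 2 ^ X.card ∧
  (∀ P Q : Finset V, Disjoint P Q → P ∪ Q = X →
    ∃! δ, δ ∈ Δ ∧ δ.T ∩ X = P ∧ δ.F ∩ X = Q) ∧
  (∀ δ ∈ Δ, ∀ δ' ∈ Δ, δ ≠ δ' → δ.T \ X = δ'.T \ X ∧ δ.F \ X = δ'.F \ X)

/-- Strong applicability of a sensing action in a set of p-states. -/
def StrongApp (a : SAct V) (Δ : Finset (St V)) : Prop :=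
  (∃ X, SensedSet a Δ X) ∧ ∀ δ ∈ Δ, Disjoint a.preP δ.F ∧ Disjoint a.preN δ.T

/-- Applicability of a sensing action in a set of p-states: some family of partial
extensions of the members of `Δ` makes `a` strongly applicable, and `Sens_a` is known
in every member of `Δ`. -/
def AppS (a : SAct V) (Δ : Finset (St V)) : Prop :=
  (∃ e : St V → St V, (∀ δ ∈ Δ, pext δ (e δ)) ∧ Set.InjOn e ↑Δ ∧ StrongApp a (Δ.image e)) ∧
  (∀ δ ∈ Δ, a.sens ⊆ δ.T ∪ δ.F)

/-- `S_{a,Δ}`: the sensed set of a family of partial extensions of `Δ`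
(well-defined by the "unique sensed set" lemma). -/
noncomputable def SaD (a : SAct V) (Δ : Finset (St V)) : Finset V :=
  if h : ∃ X, ∃ e : St V → St V, (∀ δ ∈ Δ, pext δ (e δ)) ∧ Set.InjOn e ↑Δ ∧
      SensedSet a (Δ.image e) X
  then h.choose else ∅

/-- Regression of a sensing action over a set of p-states (`none` is `⊥`). -/
noncomputable def RegressS (a : SAct V) (Δ : Finset (St V)) : Option (St V) :=
  if AppS a Δ then
    some ⟨(Δ.sup St.T) \ SaD a Δ ∪ a.preP, (Δ.sup St.F) \ SaD a Δ ∪ a.preN⟩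
  else none

/-! ## Formulas (conjunctions of fluent literals) -/

/-- A conjunction of fluent literals, given by its positive and negative fluents. -/
abbrev Form (V : Type*) := Finset V × Finset V

/-- A conjunction of literals is consistent if no fluent occurs both positively and
negatively. -/
def Consistent (φ : Form V) : Prop := Disjoint φ.1 φ.2

/-- Two conjunctions of literals are mutually exclusive. -/
def MutEx (φ ψ : Form V) : Prop := ¬ Disjoint φ.1 ψ.2 ∨ ¬ Disjoint ψ.1 φ.2

/-- A conjunction of literals holds in an a-state. -/
def holds (φ : Form V) (σ : St V) : Prop := φ.1 ⊆ σ.T ∧ φ.2 ⊆ σ.F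

/-- `BIN S`: all binary representations of the nonempty set of fluents `S`. -/
def BIN (S : Finset V) : Finset (Form V) :=
  S.powerset.image (fun P => (P, S \ P))

/-- The set of conjunctions `χ` spans over the set of fluents `S`. -/
def spans (χ : Finset (Form V)) (S : Finset V) : Prop :=
  ∃ φ : Form V, Consistent φ ∧ φ ∉ χ ∧ Disjoint S (φ.1 ∪ φ.2) ∧
    χ = (BIN S).image (fun ψ => (φ.1 ∪ ψ.1, φ.2 ∪ ψ.2))

/-! ## Conditional plans -/

/-- Conditional plans. -/
inductive Plan (V : Type*) where
  | empty : Plan V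
  | action : NAct V → Plan V
  | pcase : SAct V → List (Form V × Plan V) → Plan V
  | seq : Plan V → Plan V → Plan V

/-- Well-formedness of a conditional plan: in every case plan the guards are
consistent and pairwise mutually exclusive conjunctions of literals. -/
inductive Plan.WF : Plan V → Prop
  | empty : Plan.WF .empty
  | action (a : NAct V) : Plan.WF (.action a)
  | pcase (a : SAct V) (bs : List (Form V × Plan V)) :
      (∀ b ∈ bs, Consistent b.1) →
      bs.Pairwise (fun b b' => MutEx b.1 b'.1) →
      (∀ b ∈ bs, Plan.WF b.2) → Plan.WF (.pcase a bs)
  | seq {c₁ c₂ : Plan V} : Plan.WF c₁ → Plan.WF c₂ → Plan.WF (.seq c₁ c₂)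

/-- The graph of the extended transition function `Φ*`:
`PhiStarR c x y` means `y ∈ Φ*(c, x)` (where `none` is `⊥`). -/
inductive PhiStarR : Plan V → Option (St V) → Option (St V) → Prop
  | bot (c : Plan V) : PhiStarR c none none
  | empty (σ : St V) : PhiStarR .empty (some σ) (some σ)
  | action (a : NAct V) (σ : St V) (x : Option (St V)) :
      x ∈ PhiN a σ → PhiStarR (.action a) (some σ) x
  | caseBot (a : SAct V) (bs : List (Form V × Plan V)) (σ : St V) :
      none ∈ PhiS a σ → PhiStarR (.pcase a bs) (some σ) none
  | caseHit (a : SAct V) (bs : List (Form V × Plan V)) (σ σ' : St V)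
      (φ : Form V) (p : Plan V) (x : Option (St V)) :
      some σ' ∈ PhiS a σ → (φ, p) ∈ bs → holds φ σ' →
      PhiStarR p (some σ') x → PhiStarR (.pcase a bs) (some σ) x
  | caseMiss (a : SAct V) (bs : List (Form V × Plan V)) (σ σ' : St V) :
      some σ' ∈ PhiS a σ → (∀ b ∈ bs, ¬ holds b.1 σ') →
      PhiStarR (.pcase a bs) (some σ) none
  | seq (c₁ c₂ : Plan V) (σ : St V) (y x : Option (St V)) :
      PhiStarR c₁ (some σ) y → PhiStarR c₂ y x → PhiStarR (.seq c₁ c₂) (some σ) x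

/-- `R(cᵢ,δ)` from the definition of `Regress*` on case plans (the consistent case). -/
def Rform (φ : Form V) (st : St V) : St V := ⟨st.T ∪ φ.1, st.F ∪ φ.2⟩

/-- The graph of the extended regression function `Regress*`:
`RegStarR c x y` means `Regress*(c, x) = y` (where `none` is `⊥`). -/
inductive RegStarR : Plan V → Option (St V) → Option (St V) → Prop
  | bot (c : Plan V) : RegStarR c none none
  | empty (δ : St V) : RegStarR .empty (some δ) (some δ)
  | action (a : NAct V) (δ : St V) : RegStarR (.action a) (some δ) (RegressN a δ)
  | caseBot (a : SAct V) (bs : List (Form V × Plan V)) (δ : St V)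
      (b : Form V × Plan V) :
      b ∈ bs → RegStarR b.2 (some δ) none → RegStarR (.pcase a bs) (some δ) none
  | caseRBot (a : SAct V) (bs : List (Form V × Plan V)) (δ : St V)
      (b : Form V × Plan V) (st : St V) :
      b ∈ bs → RegStarR b.2 (some δ) (some st) →
      ¬ (Disjoint b.1.1 st.F ∧ Disjoint b.1.2 st.T) →
      RegStarR (.pcase a bs) (some δ) none
  | caseGo (a : SAct V) (bs : List (Form V × Plan V)) (δ : St V)
      (r : Form V × Plan V → St V) :
      (∀ b ∈ bs, RegStarR b.2 (some δ) (some (r b))) →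
      (∀ b ∈ bs, Disjoint b.1.1 (r b).F ∧ Disjoint b.1.2 (r b).T) →
      RegStarR (.pcase a bs) (some δ)
        (RegressS a ((bs.map (fun b => Rform b.1 (r b))).toFinset))
  | seq (c₁ c₂ : Plan V) (δ : St V) (y x : Option (St V)) :
      RegStarR c₂ (some δ) y → RegStarR c₁ y x → RegStarR (.seq c₁ c₂) (some δ) x

/-! ## Subplans, redundancy, regressability -/

/-- One editing step producing a "smaller" plan: removing an instance of a
non-sensing action, removing a case plan or one of its branches, or replacing a
sensing action by a sub sensing action; possibly deep inside the plan. -/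
inductive Edit : Plan V → Plan V → Prop
  | dropAct (a : NAct V) : Edit (.action a) .empty
  | dropCase (a : SAct V) (bs : List (Form V × Plan V)) : Edit (.pcase a bs) .empty
  | dropBranch (a : SAct V) (b : Form V × Plan V) (l₁ l₂ : List (Form V × Plan V)) :
      Edit (.pcase a (l₁ ++ b :: l₂)) (.pcase a (l₁ ++ l₂))
  | subSense (a a' : SAct V) (bs : List (Form V × Plan V)) :
      a'.preP = a.preP → a'.preN = a.preN → a'.sens ⊂ a.sens →
      Edit (.pcase a bs) (.pcase a' bs)
  | inBranch (a : SAct V) (φ : Form V) (p p' : Plan V) (l₁ l₂ : List (Form V × Plan V)) :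
      Edit p p' →
      Edit (.pcase a (l₁ ++ (φ, p) :: l₂)) (.pcase a (l₁ ++ (φ, p') :: l₂))
  | seqL {c₁ c₁' : Plan V} (c₂ : Plan V) : Edit c₁ c₁' → Edit (.seq c₁ c₂) (.seq c₁' c₂)
  | seqR {c₂ c₂' : Plan V} (c₁ : Plan V) : Edit c₂ c₂' → Edit (.seq c₁ c₂) (.seq c₁ c₂')

/-- `c'` is a subplan of `c`. -/
def IsSubplan (c' c : Plan V) : Prop := Relation.TransGen Edit c c'

/-- `⊥ ∉ Φ*(c,σ)` and `Φ*(c,σ) ⊆ ext(δ)`. -/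
def Achieves (c : Plan V) (σ δ : St V) : Prop :=
  ∀ x, PhiStarR c (some σ) x → ∃ σ' ∈ exts δ, x = some σ'

/-- `c` is redundant with respect to `(σ,δ)`. -/
def Redundant (c : Plan V) (σ δ : St V) : Prop :=
  Achieves c σ δ ∧ ∃ c', IsSubplan c' c ∧ Achieves c' σ δ

/-- A case plan `a;case(φ₁→c₁,…,φₙ→cₙ)` is possibly regressable. -/
def PRCase (a : SAct V) (bs : List (Form V × Plan V)) : Prop :=
  (∃ S : Finset V, S.Nonempty ∧ S ⊆ a.sens ∧ spans (bs.map Prod.fst).toFinset S) ∧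
  ∀ b ∈ bs, a.sens ⊆ b.1.1 ∪ b.1.2

/-- Every case plan occurring in `c` is possibly regressable. -/
inductive AllCasesPR : Plan V → Prop
  | empty : AllCasesPR .empty
  | action (a : NAct V) : AllCasesPR (.action a)
  | pcase (a : SAct V) (bs : List (Form V × Plan V)) :
      PRCase a bs → (∀ b ∈ bs, AllCasesPR b.2) → AllCasesPR (.pcase a bs)
  | seq {c₁ c₂ : Plan V} : AllCasesPR c₁ → AllCasesPR c₂ → AllCasesPR (.seq c₁ c₂)

/-- `c` is regressable with respect to `(σ,δ)`. -/
def Regressable (c : Plan V) (σ δ : St V) : Prop :=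
  AllCasesPR c ∧ Achieves c σ δ ∧ ¬ Redundant c σ δ

/-! ## Normalized plans -/

/-- Normalized conditional plans: a sequence of non-sensing actions followed by
either nothing or a case plan all of whose branches are normalized. -/
inductive Normalized : Plan V → Prop
  | empty : Normalized .empty
  | single (a : NAct V) : Normalized (.action a)
  | pcase (a : SAct V) (bs : List (Form V × Plan V)) :
      (∀ b ∈ bs, Normalized b.2) → Normalized (.pcase a bs)
  | cons (a : NAct V) {c : Plan V} : Normalized c → Normalized (.seq (.action a) c)

/-- `normSeq c k` normalizes the plan `c ; k`, assuming `k` is already normalized. -/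
def normSeq : Plan V → Plan V → Plan V
  | .empty, k => k
  | .action a, k => .seq (.action a) k
  | .pcase a bs, k => .pcase a (bs.attach.map (fun b => (b.1.1, normSeq b.1.2 k)))
  | .seq c₁ c₂, k => normSeq c₁ (normSeq c₂ k)
termination_by c _ => sizeOf c
decreasing_by
  all_goals simp_wf
  all_goals first
    | omega
    | (have h := List.sizeOf_lt_of_mem b.2
       obtain ⟨⟨f, p⟩, hb⟩ := b
       simp at *
       omega)

/-- `normalized(c)`. -/
def normalizePlan (c : Plan V) : Plan V := normSeq c .empty

/-! ## Sequences of non-sensing actions -/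

/-- The conditional plan `a₁;…;aₙ;k` determined by a list of non-sensing actions. -/
def seqP : List (NAct V) → Plan V → Plan V
  | [], k => k
  | a :: t, k => .seq (.action a) (seqP t k)

instance (a : NAct V) (σ : St V) : Decidable (a.execIn σ) :=
  inferInstanceAs (Decidable (a.preP ⊆ σ.T ∧ a.preN ⊆ σ.F))

/-- `Φ*` specialized to a sequence of non-sensing actions, as a function
(`none` is `⊥`). -/
def runSeq : List (NAct V) → St V → Option (St V)
  | [], σ => some σ
  | a :: t, σ => if a.execIn σ then runSeq t (a.res σ) else none

/-- `Regress*` specialized to a sequence of non-sensing actions, as a function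
(`none` is `⊥`). -/
noncomputable def regSeq : List (NAct V) → St V → Option (St V)
  | [], δ => some δ
  | a :: t, δ => match regSeq t δ with
      | none => none
      | some δ' => RegressN a δ'

/-- For a sequence of non-sensing actions: `⊥ ∉ Φ*(l,σ)` and `Φ*(l,σ) ⊆ ext(δ)`. -/
def SeqAchieves (l : List (NAct V)) (σ δ : St V) : Prop :=
  ∃ σ', runSeq l σ = some σ' ∧ σ' ∈ exts δ

/-- Redundancy of a sequence of non-sensing actions with respect to `(σ,δ)`
(a subplan of a sequence is a proper sublist of it). -/
def SeqRedundant (l : List (NAct V)) (σ δ : St V) : Prop :=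
  SeqAchieves l σ δ ∧ ∃ l', List.Sublist l' l ∧ l' ≠ l ∧ SeqAchieves l' σ δ

/-- Regressability of a sequence of non-sensing actions with respect to `(σ,δ)`. -/
def SeqRegressable (l : List (NAct V)) (σ δ : St V) : Prop :=
  SeqAchieves l σ δ ∧ ¬ SeqRedundant l σ δ

/-! ## The regression search algorithm -/

/-- The sets of plan-state pairs reachable by the algorithm `Solve(P)` from the
initial set `{⟨[], δ_G⟩}` using steps 4.1 (non-sensing regression) and 4.2
(sensing regression). -/
inductive Reach (δG : St V) : Set (Plan V × St V) → Prop
  | init : Reach δG {(Plan.empty, δG)}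
  | step1 {N : Set (Plan V × St V)} (c : Plan V) (δ : St V) (a : NAct V) (δ' : St V) :
      Reach δG N → (c, δ) ∈ N → RegressN a δ = some δ' →
      (∀ p ∈ N, p.2 ≠ δ') →
      Reach δG (insert (Plan.seq (.action a) c, δ') N)
  | step2 {N : Set (Plan V × St V)} (a : SAct V) (bs : List (Form V × Plan V))
      (ds : Form V × Plan V → St V) (S : Finset V) (δ' : St V) :
      Reach δG N →
      (∀ b ∈ bs, (b.2, ds b) ∈ N) →
      S.Nonempty → S ⊆ a.sens → spans (bs.map Prod.fst).toFinset S →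
      (∀ b ∈ bs, (Rform b.1 (ds b)).OK) →
      RegressS a ((bs.map (fun b => Rform b.1 (ds b))).toFinset) = some δ' →
      (∀ p ∈ N, p.2 ≠ δ') →
      Reach δG (insert (Plan.pcase a bs, δ') N)

/-- `N` is saturated: no step of type 4.1 or 4.2 can produce a p-state not
already occurring in `N`. -/
def Saturated (N : Set (Plan V × St V)) : Prop :=
  (∀ (c : Plan V) (δ : St V) (a : NAct V) (δ' : St V),
      (c, δ) ∈ N → RegressN a δ = some δ' → ∃ p ∈ N, p.2 = δ') ∧
  (∀ (a : SAct V) (bs : List (Form V × Plan V)) (ds : Form V × Plan V → St V)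
      (S : Finset V) (δ' : St V),
      (∀ b ∈ bs, (b.2, ds b) ∈ N) →
      S.Nonempty → S ⊆ a.sens → spans (bs.map Prod.fst).toFinset S →
      (∀ b ∈ bs, (Rform b.1 (ds b)).OK) →
      RegressS a ((bs.map (fun b => Rform b.1 (ds b))).toFinset) = some δ' →
      ∃ p ∈ N, p.2 = δ')


/-! The proof is an induction on the derivation of `Regress*(c, δ) = δ'`. A non-sensing
action is executable in every extension of its regression, and its add and delete lists,
being compatible with `δ`, carry that extension into `ext(δ)`. For a case plan, every
outcome `σ'` of the sensing action knows the sensed set `S = S_{a,Δ}`, so by properness some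
member of the strongly applicable family of partial extensions agrees with `σ'` on `S`; off
`S` the corresponding `R(cᵢ, δ)` lies below the regressed state. Hence `σ'` extends some
`R(cᵢ, δ)`: it satisfies the guard `φᵢ`, which selects branch `i` by mutual exclusivity,
and lies in `ext(Regress*(cᵢ, δ))`, where the induction hypothesis applies. -/

lemma holds_unique_of_pairwise_mutEx {bs : List (Form V × Plan V)}
    (hmx : bs.Pairwise (fun b b' => MutEx b.1 b'.1)) {σ : St V} (hσ : σ.OK)
    {b b' : Form V × Plan V} (hb : b ∈ bs) (hb' : b' ∈ bs)
    (h : holds b.1 σ) (h' : holds b'.1 σ) : b = b' := by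
  by_contra hne
  have : Std.Symm (fun (b b' : Form V × Plan V) => MutEx b.1 b'.1) :=
    ⟨fun _ _ => Or.symm⟩
  rcases List.Pairwise.forall hmx hb hb' hne with hx | hx
  · obtain ⟨f, hf, hf'⟩ := Finset.not_disjoint_iff.mp hx
    exact Finset.disjoint_left.mp hσ (h.1 hf) (h'.2 hf')
  · obtain ⟨f, hf, hf'⟩ := Finset.not_disjoint_iff.mp hx
    exact Finset.disjoint_left.mp hσ (h'.1 hf) (h.2 hf')

lemma RegStarR.eq_none_of_none {c : Plan V} {y : Option (St V)} (h : RegStarR c none y) :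
    y = none := by
  cases h; rfl

lemma mem_exts_Rform_iff {φ : Form V} {δ σ : St V} :
    σ ∈ exts (Rform φ δ) ↔ holds φ σ ∧ σ ∈ exts δ := by
  simp only [exts, Rform, holds, Set.mem_ofPred_eq, Finset.union_subset_iff]
  tauto

lemma NAct.res_ok (a : NAct V) {σ : St V} (hσ : σ.OK) : (a.res σ).OK := by
  simp only [St.OK, NAct.res, Finset.disjoint_left, Finset.mem_union, Finset.mem_sdiff]
  rintro f (⟨hfT, hfd⟩ | hfa) (⟨hfF, hfa'⟩ | hfd')
  · exact Finset.disjoint_left.mp hσ hfT hfF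
  · exact hfd hfd'
  · exact hfa' hfa
  · exact Finset.disjoint_left.mp a.hdisj hfa hfd'

lemma NAct.regressN_sound {a : NAct V} {δ δ' σ : St V} (h : RegressN a δ = some δ')
    (hσ : σ ∈ exts δ') : a.execIn σ ∧ a.res σ ∈ exts δ := by
  rw [RegressN] at h
  split_ifs at h with happ
  obtain ⟨-, haddF, hdelT, -, -⟩ := happ
  cases h
  obtain ⟨hok, hT, hF⟩ := hσ
  refine ⟨⟨Finset.subset_union_right.trans hT, Finset.subset_union_right.trans hF⟩,
    a.res_ok hok, fun f hf => ?_, fun f hf => ?_⟩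
  · by_cases hfa : f ∈ a.add
    · exact Finset.mem_union_right _ hfa
    · exact Finset.mem_union_left _ <| Finset.mem_sdiff.mpr
        ⟨hT (by simp [hf, hfa]), fun hfd => Finset.disjoint_left.mp hdelT hfd hf⟩
  · by_cases hfd : f ∈ a.del
    · exact Finset.mem_union_right _ hfd
    · exact Finset.mem_union_left _ <| Finset.mem_sdiff.mpr
        ⟨hF (by simp [hf, hfd]), fun hfa => Finset.disjoint_left.mp haddF hfa hf⟩

lemma sens_subset_of_mem_sres {a : SAct V} {σ σ' : St V} (h : σ' ∈ sres a σ) :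
    a.sens ⊆ σ'.T ∪ σ'.F := by
  obtain ⟨-, hT, hF, hnew⟩ := h
  intro f hf
  by_cases hold : f ∈ σ.T ∪ σ.F
  · exact Finset.union_subset_union hT hF hold
  · have : f ∈ (σ'.T \ σ.T) ∪ (σ'.F \ σ.F) := hnew ▸ Finset.mem_sdiff.mpr ⟨hf, hold⟩
    exact Finset.union_subset_union Finset.sdiff_subset Finset.sdiff_subset this

lemma SensedSet.exists_agree {a : SAct V} {Δ : Finset (St V)} {X : Finset V}
    (hX : SensedSet a Δ X) {σ : St V} (hσ : σ.OK) (hknown : X ⊆ σ.T ∪ σ.F) :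
    ∃ δ ∈ Δ, δ.T ∩ X = σ.T ∩ X ∧ δ.F ∩ X = σ.F ∩ X := by
  have hcover : σ.T ∩ X ∪ σ.F ∩ X = X := by
    rw [← Finset.union_inter_distrib_right]
    exact Finset.inter_eq_right.mpr hknown
  obtain ⟨δ, hδ, -⟩ := hX.2.2.2.2.1 _ _
    (hσ.mono Finset.inter_subset_left Finset.inter_subset_left) hcover
  exact ⟨δ, hδ⟩

lemma AppS.exists_sensedSet_SaD {a : SAct V} {Δ : Finset (St V)} (h : AppS a Δ) :
    ∃ e : St V → St V, (∀ δ ∈ Δ, pext δ (e δ)) ∧ SensedSet a (Δ.image e) (SaD a Δ) := by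
  obtain ⟨⟨e, hpe, hinj, ⟨X, hX⟩, -⟩, -⟩ := h
  have hex : ∃ X, ∃ e : St V → St V, (∀ δ ∈ Δ, pext δ (e δ)) ∧ Set.InjOn e ↑Δ ∧
      SensedSet a (Δ.image e) X := ⟨X, e, hpe, hinj, hX⟩
  rw [SaD, dif_pos hex]
  obtain ⟨e', hpe', -, hX'⟩ := hex.choose_spec
  exact ⟨e', hpe', hX'⟩

lemma subset_of_agree_on {S A B D : Finset V} (hAB : A ⊆ B) (hBS : B ∩ S = D ∩ S)
    (hA : A \ S ⊆ D) : A ⊆ D := by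
  intro f hf
  by_cases hfS : f ∈ S
  · exact (Finset.mem_inter.mp (hBS ▸ Finset.mem_inter.mpr ⟨hAB hf, hfS⟩)).1
  · exact hA (Finset.mem_sdiff.mpr ⟨hf, hfS⟩)

lemma regressS_sound {a : SAct V} {Δ : Finset (St V)} {δ' σ : St V}
    (h : RegressS a Δ = some δ') (hσ : σ ∈ exts δ') :
    a.execIn σ ∧ ∀ σ' ∈ sres a σ, ∃ δ ∈ Δ, σ' ∈ exts δ := by
  rw [RegressS] at h
  split_ifs at h with happ
  cases h
  obtain ⟨-, hT, hF⟩ := hσ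
  refine ⟨⟨Finset.subset_union_right.trans hT, Finset.subset_union_right.trans hF⟩,
    fun σ' hσ' => ?_⟩
  obtain ⟨e, hpe, hX⟩ := happ.exists_sensedSet_SaD
  obtain ⟨_, hmem, hagT, hagF⟩ :=
    hX.exists_agree hσ'.1 (hX.2.1.trans (sens_subset_of_mem_sres hσ'))
  obtain ⟨δ, hδ, rfl⟩ := Finset.mem_image.mp hmem
  -- Off the sensed set `δ` lies below the regressed state; on it, below `e δ`, which
  -- agrees with `σ'` there.
  have hoffT : δ.T \ SaD a Δ ⊆ σ'.T := fun _ hf =>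
    hσ'.2.1 <| hT <| Finset.mem_union_left _ <| Finset.sdiff_subset_sdiff
      (Finset.le_sup (f := St.T) hδ) subset_rfl hf
  have hoffF : δ.F \ SaD a Δ ⊆ σ'.F := fun _ hf =>
    hσ'.2.2.1 <| hF <| Finset.mem_union_left _ <| Finset.sdiff_subset_sdiff
      (Finset.le_sup (f := St.F) hδ) subset_rfl hf
  exact ⟨δ, hδ, hσ'.1, subset_of_agree_on (hpe δ hδ).1 hagT hoffT,
    subset_of_agree_on (hpe δ hδ).2 hagF hoffF⟩

lemma mem_PhiN_of_execIn {a : NAct V} {σ : St V} {x : Option (St V)} (hex : a.execIn σ)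
    (hx : x ∈ PhiN a σ) : x = some (a.res σ) := by
  rcases hx with ⟨-, rfl⟩ | ⟨hne, -⟩
  · rfl
  · exact absurd hex hne

lemma mem_PhiS_of_execIn {a : SAct V} {σ : St V} {x : Option (St V)} (hex : a.execIn σ)
    (hx : x ∈ PhiS a σ) : ∃ σ' ∈ sres a σ, x = some σ' := by
  rcases hx with ⟨-, hσ'⟩ | ⟨hne, -⟩
  · exact hσ'
  · exact absurd hex hne

lemma Achieves.not_bot {c : Plan V} {σ δ : St V} (h : Achieves c σ δ) :
    ¬ PhiStarR c (some σ) none := fun hbot => by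
  obtain ⟨_, -, ⟨⟩⟩ := h none hbot

lemma achieves_empty {σ δ : St V} (hσ : σ ∈ exts δ) : Achieves .empty σ δ := by
  intro x hx
  cases hx
  exact ⟨σ, hσ, rfl⟩

lemma achieves_action {a : NAct V} {δ δ' σ : St V} (h : RegressN a δ = some δ')
    (hσ : σ ∈ exts δ') : Achieves (.action a) σ δ := by
  obtain ⟨hex, hres⟩ := NAct.regressN_sound h hσ
  rintro x (_ | _ | ⟨_, _, _, hx⟩)
  exact ⟨_, hres, mem_PhiN_of_execIn hex hx⟩

lemma Achieves.seq {c₁ c₂ : Plan V} {σ δ₂ δ : St V} (h₁ : Achieves c₁ σ δ₂)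
    (h₂ : ∀ τ ∈ exts δ₂, Achieves c₂ τ δ) : Achieves (.seq c₁ c₂) σ δ := by
  rintro x (_ | _ | _ | _ | _ | _ | ⟨_, _, _, y, _, hy, hx⟩)
  obtain ⟨τ, hτ, rfl⟩ := h₁ y hy
  exact h₂ τ hτ x hx

lemma achieves_pcase {a : SAct V} {bs : List (Form V × Plan V)} {r : Form V × Plan V → St V}
    {δ δ' σ : St V} (hmx : bs.Pairwise (fun b b' => MutEx b.1 b'.1))
    (h : RegressS a ((bs.map (fun b => Rform b.1 (r b))).toFinset) = some δ')
    (hσ : σ ∈ exts δ') (hbs : ∀ b ∈ bs, ∀ τ ∈ exts (r b), Achieves b.2 τ δ) :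
    Achieves (.pcase a bs) σ δ := by
  obtain ⟨hex, hcover⟩ := regressS_sound h hσ
  have hbranch : ∀ σ' ∈ sres a σ, ∃ b ∈ bs, holds b.1 σ' ∧ σ' ∈ exts (r b) := by
    intro σ' hσ'
    obtain ⟨_, hmem, hext⟩ := hcover σ' hσ'
    obtain ⟨b, hb, rfl⟩ := List.mem_map.mp (List.mem_toFinset.mp hmem)
    exact ⟨b, hb, mem_exts_Rform_iff.mp hext⟩
  intro x hx
  cases hx with
  | caseBot _ _ _ hbot =>
    obtain ⟨_, -, ⟨⟩⟩ := mem_PhiS_of_execIn hex hbot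
  | caseHit _ _ _ σ' φ p _ hσ' hmem hhold hrun =>
    obtain ⟨_, hsr, ⟨⟩⟩ := mem_PhiS_of_execIn hex hσ'
    obtain ⟨b, hb, hbhold, hbext⟩ := hbranch σ' hsr
    obtain rfl := holds_unique_of_pairwise_mutEx hmx hsr.1 hmem hb hhold hbhold
    exact hbs _ hmem σ' hbext x hrun
  | caseMiss _ _ _ σ' hσ' hnone =>
    obtain ⟨_, hsr, ⟨⟩⟩ := mem_PhiS_of_execIn hex hσ'
    obtain ⟨b, hb, hbhold, -⟩ := hbranch σ' hsr
    exact absurd hbhold (hnone b hb)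

lemma RegStarR.achieves {c : Plan V} {x y : Option (St V)} (h : RegStarR c x y)
    (hwf : c.WF) :
    ∀ δ δ', x = some δ → y = some δ' → ∀ σ ∈ exts δ', Achieves c σ δ := by
  induction h with
  | bot => nofun
  | empty => rintro δ δ' ⟨⟩ ⟨⟩ σ hσ; exact achieves_empty hσ
  | action => rintro δ δ' ⟨⟩ h σ hσ; exact achieves_action h hσ
  | caseBot | caseRBot => rintro δ δ' - ⟨⟩
  | caseGo _ _ δ₀ r _ _ ih =>
    rintro δ δ' ⟨⟩ h σ hσ
    cases hwf with | pcase _ _ _ hmx hwfb =>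
    exact achieves_pcase hmx h hσ fun b hb => ih b hb (hwfb b hb) δ₀ (r b) rfl rfl
  | seq _ _ δ₀ y _ _ h₁ ih₂ ih₁ =>
    rintro δ δ' ⟨⟩ hx σ hσ
    cases hwf with | seq hwf₁ hwf₂ =>
    obtain _ | δ₂ := y
    · cases hx.symm.trans h₁.eq_none_of_none
    exact (ih₁ hwf₁ δ₂ δ' rfl hx σ hσ).seq fun τ hτ => ih₂ hwf₂ δ₀ δ₂ rfl rfl τ hτ

theorem regstar_sound_general
    (δ : St V) (c : Plan V) (hwf : c.WF)
    (δ' : St V) (h : RegStarR c (some δ) (some δ')) :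
    ∀ σ ∈ exts δ',
      ¬ PhiStarR c (some σ) none ∧
      ∀ x, PhiStarR c (some σ) x → ∃ σ'' ∈ exts δ, x = some σ'' := fun σ hσ =>
  have hach := h.achieves hwf δ δ' rfl rfl σ hσ
  ⟨hach.not_bot, hach⟩

/-- soundness of `Regress*` for arbitrary conditional plans:
if `Regress*(c,δ) = δ' ≠ ⊥` then for every `σ ∈ ext(δ')`, `⊥ ∉ Φ*(c,σ)` and
`Φ*(c,σ) ⊆ ext(δ)`. -/
theorem regstar_sound
    (δ : St V) (hδ : δ.OK) (c : Plan V) (hwf : c.WF)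
    (δ' : St V) (h : RegStarR c (some δ) (some δ')) :
    ∀ σ ∈ exts δ',
      ¬ PhiStarR c (some σ) none ∧
      ∀ x, PhiStarR c (some σ) x → ∃ σ'' ∈ exts δ, x = some σ'' :=
  regstar_sound_general δ c hwf δ' h
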